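/- arXiv:1407.6806 — 3 statements merged into one kernel-verified Lean document; each statement's English description precedes it below -/
import Mathlib

section
/- Let μ : m → n be a crossed module of Lie algebras over a field K, let g := n/(im μ) with canonical projection π : n → g, and equip V := ker μ with the induced g-module structure (x·v := ρ(x)·v for any ρ(x) ∈ n with π(ρ(x)) = x; this is independent of the choice of lift). Let ρ : g → n be a linear section of π and let β : g × g → m be an alternating bilinear map with μ(β(x,y)) = [ρ(x),ρ(y)] − ρ([x,y]) for all x,y ∈ g (such β exists since im μ = ker π contains the right-hand side). Define D(x,y,z) := ρ(x)·β(y,z) − ρ(y)·β(x,z) + ρ(z)·β(x,y) − β([x,y],z) + β([x,z],y) − β([y,z],x). Then: (i) μ(D(x,y,z)) = 0 for all x,y,z ∈ g, so γ := D takes values in V = ker μ; and (ii) γ is a Chevalley–Eilenberg 3-cocycle of g with values in V, i.e. for all x₁,x₂,x₃,x₄ ∈ g: x₁·γ(x₂,x₃,x₄) − x₂·γ(x₁,x₃,x₄) + x₃·γ(x₁,x₂,x₄) − x₄·γ(x₁,x₂,x₃) − γ([x₁,x₂],x₃,x₄) + γ([x₁,x₃],x₂,x₄) − γ([x₁,x₄],x₂,x₃)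 − γ([x₂,x₃],x₁,x₄) + γ([x₂,x₄],x₁,x₃) − γ([x₃,x₄],x₁,x₂) = 0. -/
/-!
The cochain `D` is the Chevalley–Eilenberg differential `d_ρ β` computed with the map
`x ↦ act (ρ x)`, which is not a Lie action of `g`: its failure to be one is measured by the
curvature `κ(x, y) = ⁅ρ x, ρ y⁆ - ρ ⁅x, y⁆` of the section. The hypothesis on `β` says
`μ ∘ β = κ`, so by equivariance `μ (d_ρ β) = d_ρ κ`, which vanishes by the Bianchi identity.
For the cocycle condition, `d_ρ (d_ρ β)` is a sum of terms `κ(xᵢ, xⱼ) · β(xₖ, xₗ)` over the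
pairings of `{1, 2, 3, 4}`; by the Peiffer identity `κ(x, y)` acts on `m` as `ad (β x y)`, and
the terms `⁅β(xᵢ, xⱼ), β(xₖ, xₗ)⁆` cancel in pairs by antisymmetry of the bracket.
-/

theorem lie_lie_left_eq_sub {L : Type*} [LieRing L] (a b c : L) :
    ⁅⁅b, c⁆, a⁆ = ⁅⁅a, c⁆, b⁆ - ⁅⁅a, b⁆, c⁆ := by
  rw [lie_lie a c b, ← lie_skew c b, lie_neg, ← lie_skew ⁅a, b⁆ c, ← lie_skew a ⁅b, c⁆]
  abel

namespace ChevalleyEilenberg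

variable {R L V : Type*} [CommRing R] [LieRing L] [AddCommGroup V] [Module R V]

def curvature {A : Type*} [LieRing A] (ρ : L → A) (x y : L) : A := ⁅ρ x, ρ y⁆ - ρ ⁅x, y⁆

def d₂ (φ : L → Module.End R V) (β : L → L → V) (x y z : L) : V :=
  φ x (β y z) - φ y (β x z) + φ z (β x y) - β ⁅x, y⁆ z + β ⁅x, z⁆ y - β ⁅y, z⁆ x

def d₃ (φ : L → Module.End R V) (γ : L → L → L → V) (x₁ x₂ x₃ x₄ : L) : V :=
  φ x₁ (γ x₂ x₃ x₄) - φ x₂ (γ x₁ x₃ x₄) + φ x₃ (γ x₁ x₂ x₄) - φ x₄ (γ x₁ x₂ x₃)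
    - γ ⁅x₁, x₂⁆ x₃ x₄ + γ ⁅x₁, x₃⁆ x₂ x₄ - γ ⁅x₁, x₄⁆ x₂ x₃
    - γ ⁅x₂, x₃⁆ x₁ x₄ + γ ⁅x₂, x₄⁆ x₁ x₃ - γ ⁅x₃, x₄⁆ x₁ x₂

theorem map_d₂ {W : Type*} [AddCommGroup W] [Module R W] (f : V →ₗ[R] W)
    {φ : L → Module.End R V} {ψ : L → Module.End R W} (hf : ∀ x v, f (φ x v) = ψ x (f v))
    (β : L → L → V) (x y z : L) :
    f (d₂ φ β x y z) = d₂ ψ (fun a b => f (β a b)) x y z := by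
  simp only [d₂, map_sub, map_add, hf]

variable [LieAlgebra R L]

theorem d₂_curvature_eq_zero {A : Type*} [LieRing A] [LieAlgebra R A] (ρ : L →ₗ[R] A)
    (x y z : L) : d₂ (fun x => LieAlgebra.ad R A (ρ x)) (curvature ρ) x y z = 0 := by
  simp only [d₂, curvature, LieAlgebra.ad_apply, map_sub, lie_lie_left_eq_sub x y z,
    ← lie_skew (ρ z) ⁅ρ x, ρ y⁆, lie_lie, ← lie_skew (ρ ⁅y, z⁆) (ρ x),
    ← lie_skew (ρ ⁅x, z⁆) (ρ y), ← lie_skew (ρ ⁅x, y⁆) (ρ z)]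
  abel

theorem d₃_d₂ (φ : L → Module.End R V) (F : L → L → V → V)
    (hF : ∀ a b v, φ ⁅a, b⁆ v = φ a (φ b v) - φ b (φ a v) - F a b v)
    {β : L →ₗ[R] L →ₗ[R] V} (hβ : β.IsAlt) (x₁ x₂ x₃ x₄ : L) :
    d₃ φ (d₂ φ (β · ·)) x₁ x₂ x₃ x₄ =
      F x₁ x₂ (β x₃ x₄) - F x₁ x₃ (β x₂ x₄) + F x₁ x₄ (β x₂ x₃)
        + F x₂ x₃ (β x₁ x₄) - F x₂ x₄ (β x₁ x₃) + F x₃ x₄ (β x₁ x₂) := by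
  simp only [d₃, d₂, hF, map_sub, map_add, LinearMap.sub_apply, lie_lie_left_eq_sub x₁ x₂ x₃,
    lie_lie_left_eq_sub x₁ x₂ x₄, lie_lie_left_eq_sub x₁ x₃ x₄, lie_lie_left_eq_sub x₂ x₃ x₄,
    ← hβ.neg ⁅x₁, x₂⁆ ⁅x₃, x₄⁆, ← hβ.neg ⁅x₁, x₃⁆ ⁅x₂, x₄⁆, ← hβ.neg ⁅x₁, x₄⁆ ⁅x₂, x₃⁆]
  abel

end ChevalleyEilenberg

open ChevalleyEilenberg

theorem crossed_module_associated_three_cocycle_general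
    {K : Type*} [Field K] {m n g : Type*}
    [LieRing m] [LieAlgebra K m] [LieRing n] [LieAlgebra K n]
    [LieRing g] [LieAlgebra K g]
    (μ : m →ₗ⁅K⁆ n)
    (act : n →ₗ[K] m →ₗ[K] m)
    (h_act : ∀ (x y : n) (a : m), act ⁅x, y⁆ a = act x (act y a) - act y (act x a))
    (h_equiv : ∀ (x : n) (a : m), μ (act x a) = ⁅x, μ a⁆)
    (h_peiffer : ∀ (a b : m), act (μ a) b = ⁅a, b⁆)
    (ρ : g →ₗ[K] n)
    (β : g →ₗ[K] g →ₗ[K] m) (hβ_alt : ∀ x : g, β x x = 0)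
    (hβ : ∀ x y : g, μ (β x y) = ⁅ρ x, ρ y⁆ - ρ ⁅x, y⁆)
    (D : g → g → g → m)
    (hD : ∀ x y z : g, D x y z =
      act (ρ x) (β y z) - act (ρ y) (β x z) + act (ρ z) (β x y)
        - β ⁅x, y⁆ z + β ⁅x, z⁆ y - β ⁅y, z⁆ x) :
    (∀ x y z : g, μ (D x y z) = 0) ∧
    (∀ x₁ x₂ x₃ x₄ : g,
      act (ρ x₁) (D x₂ x₃ x₄) - act (ρ x₂) (D x₁ x₃ x₄)
        + act (ρ x₃) (D x₁ x₂ x₄) - act (ρ x₄) (D x₁ x₂ x₃)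
        - D ⁅x₁, x₂⁆ x₃ x₄ + D ⁅x₁, x₃⁆ x₂ x₄ - D ⁅x₁, x₄⁆ x₂ x₃
        - D ⁅x₂, x₃⁆ x₁ x₄ + D ⁅x₂, x₄⁆ x₁ x₃ - D ⁅x₃, x₄⁆ x₁ x₂ = 0) := by
  set φ : g → Module.End K m := fun x => act (ρ x)
  have hD_eq : D = d₂ φ (β · ·) := by
    funext x y z
    exact hD x y z
  have hμβ : (fun x y => μ (β x y)) = curvature ρ := by
    funext x y
    exact hβ x y
  have hφ_lie : ∀ a b c, φ ⁅a, b⁆ c = φ a (φ b c) - φ b (φ a c) - ⁅β a b, c⁆ := by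
    intro a b c
    have hρ_lie : ρ ⁅a, b⁆ = ⁅ρ a, ρ b⁆ - μ (β a b) := by rw [hβ]; abel
    simp only [φ, hρ_lie, map_sub, LinearMap.sub_apply, h_act, h_peiffer]
  refine ⟨fun x y z => ?_, fun x₁ x₂ x₃ x₄ => ?_⟩
  · have hμ_equiv : ∀ x a, μ (φ x a) = LieAlgebra.ad K n (ρ x) (μ a) := fun x a => h_equiv _ a
    rw [hD_eq, ← LieHom.coe_toLinearMap, map_d₂ _ hμ_equiv]
    simpa only [LieHom.coe_toLinearMap, hμβ] using d₂_curvature_eq_zero ρ x y z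
  · change d₃ φ D x₁ x₂ x₃ x₄ = 0
    rw [hD_eq, d₃_d₂ φ _ hφ_lie hβ_alt, ← lie_skew (β x₃ x₄), ← lie_skew (β x₂ x₄),
      ← lie_skew (β x₂ x₃)]
    abel

/-- Given a crossed module `μ : m → n` over `K`, with cokernel
`g` (presented by a surjective Lie algebra map `π : n → g` whose kernel is `im μ`),
a linear section `ρ` of `π`, and an alternating bilinear `β : g × g → m` with
`μ (β x y) = [ρ x, ρ y] − ρ [x,y]`, the cochain
`D(x,y,z) = ρ(x)·β(y,z) − ρ(y)·β(x,z) + ρ(z)·β(x,y) − β([x,y],z) + β([x,z],y) − β([y,z],x)`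
takes values in `ker μ` and is a Chevalley–Eilenberg 3-cocycle of `g` with values in
`V = ker μ` (the `g`-action on values being given through the lift `ρ`). -/
theorem crossed_module_associated_three_cocycle
    {K : Type*} [Field K] {m n g : Type*}
    [LieRing m] [LieAlgebra K m] [LieRing n] [LieAlgebra K n]
    [LieRing g] [LieAlgebra K g]
    (μ : m →ₗ⁅K⁆ n)
    (act : n →ₗ[K] m →ₗ[K] m)
    (h_der : ∀ (x : n) (a b : m), act x ⁅a, b⁆ = ⁅act x a, b⁆ + ⁅a, act x b⁆)
    (h_act : ∀ (x y : n) (a : m), act ⁅x, y⁆ a = act x (act y a) - act y (act x a))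
    (h_equiv : ∀ (x : n) (a : m), μ (act x a) = ⁅x, μ a⁆)
    (h_peiffer : ∀ (a b : m), act (μ a) b = ⁅a, b⁆)
    (π : n →ₗ⁅K⁆ g) (hπ_surj : Function.Surjective π)
    (hπ_ker : ∀ x : n, π x = 0 ↔ ∃ a : m, μ a = x)
    (ρ : g →ₗ[K] n) (hρ : ∀ x : g, π (ρ x) = x)
    (β : g →ₗ[K] g →ₗ[K] m) (hβ_alt : ∀ x : g, β x x = 0)
    (hβ : ∀ x y : g, μ (β x y) = ⁅ρ x, ρ y⁆ - ρ ⁅x, y⁆)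
    (D : g → g → g → m)
    (hD : ∀ x y z : g, D x y z =
      act (ρ x) (β y z) - act (ρ y) (β x z) + act (ρ z) (β x y)
        - β ⁅x, y⁆ z + β ⁅x, z⁆ y - β ⁅y, z⁆ x) :
    (∀ x y z : g, μ (D x y z) = 0) ∧
    (∀ x₁ x₂ x₃ x₄ : g,
      act (ρ x₁) (D x₂ x₃ x₄) - act (ρ x₂) (D x₁ x₃ x₄)
        + act (ρ x₃) (D x₁ x₂ x₄) - act (ρ x₄) (D x₁ x₂ x₃)
        - D ⁅x₁, x₂⁆ x₃ x₄ + D ⁅x₁, x₃⁆ x₂ x₄ - D ⁅x₁, x₄⁆ x₂ x₃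
        - D ⁅x₂, x₃⁆ x₁ x₄ + D ⁅x₂, x₄⁆ x₁ x₃ - D ⁅x₃, x₄⁆ x₁ x₂ = 0) :=
  crossed_module_associated_three_cocycle_general μ act h_act h_equiv h_peiffer ρ β hβ_alt hβ D hD
end

section
/- Let g be a Lie algebra over a field K, let 0 → V₁ →(i) V₂ →(d) V₃ → 0 be a short exact sequence of g-modules (i injective, d surjective, both g-equivariant, ker d = im i), and let α : g × g → V₃ be an alternating bilinear 2-cocycle; let E := V₃ ×_α g be the associated abelian extension. Then the linear map μ : V₂ → E, μ(v) := (d(v), 0), together with the action of E on V₂ defined by (h,x)·v := x·v, is a crossed module of Lie algebras: V₂ with the zero bracket is a Lie algebra, μ is a Lie algebra homomorphism, (h,x)·v := x·v defines an action of the Lie algebra E on V₂ by derivations, μ((h,x)·v) = [(h,x), μ(v)] holds in E, and μ(v)·v' = [v,v'] = 0 for all v,v' ∈ V₂. Moreover ker μ = i(V₁) and the cokernel of μ is isomorphic to g, giving a four-term exact sequence 0 → V₁ → V₂ → E → g → 0. -/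
/-!
Everything is a direct computation with `μ = inl ∘ d`. Since `μ` lands in `V₃ × 0`, the bracket of
the extension restricted to the image of `μ` only sees the `g`-action on `V₃`, and equivariance of
`d` turns it into the action on `V₂`. Exactness at `V₂` is exactness of `i, d` because `inl` is
injective, and exactness at `E` holds because `d` is onto, so the image of `μ` is all of `V₃ × 0`.
-/

namespace AbelianExtension

variable {K g V : Type*} [CommRing K] [LieRing g] [LieAlgebra K g]
  [AddCommGroup V] [Module K V] [LieRingModule g V]

def bracket (α : g →ₗ[K] g →ₗ[K] V) (p q : V × g) : V × g :=
  (⁅p.2, q.1⁆ - ⁅q.2, p.1⁆ + α p.2 q.2, ⁅p.2, q.2⁆)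

@[simp]
lemma bracket_snd (α : g →ₗ[K] g →ₗ[K] V) (p q : V × g) : (bracket α p q).2 = ⁅p.2, q.2⁆ :=
  rfl

lemma bracket_inl (α : g →ₗ[K] g →ₗ[K] V) (p : V × g) (h : V) :
    bracket α p (h, 0) = (⁅p.2, h⁆, 0) := by
  simp [bracket]

end AbelianExtension

namespace LinearMap

variable {K V W M : Type*} [Semiring K] [AddCommMonoid V] [Module K V]
  [AddCommMonoid W] [Module K W] [AddCommMonoid M] [Module K M]

lemma ker_inl_comp (d : V →ₗ[K] W) : ker (inl K W M ∘ₗ d) = ker d :=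
  ker_comp_of_ker_eq_bot d Submodule.ker_inl

lemma range_inl_comp_of_surjective {d : V →ₗ[K] W} (hd : Function.Surjective d) :
    range (inl K W M ∘ₗ d) = ker (snd K W M) := by
  rw [range_comp_of_range_eq_top _ (range_eq_top.mpr hd), range_inl]

end LinearMap

open LinearMap in
theorem spliced_crossed_module_general
    {K g V₁ V₂ V₃ : Type*} [Field K] [LieRing g] [LieAlgebra K g]
    [AddCommGroup V₁] [Module K V₁]
    [AddCommGroup V₂] [Module K V₂] [LieRingModule g V₂]
    [AddCommGroup V₃] [Module K V₃] [LieRingModule g V₃]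
    (i : V₁ →ₗ[K] V₂) (d : V₂ →ₗ[K] V₃)
    (hd_surj : Function.Surjective d)
    (hd_equiv : ∀ (x : g) (v : V₂), d ⁅x, v⁆ = ⁅x, d v⁆)
    (h_exact : ∀ v : V₂, d v = 0 ↔ ∃ u : V₁, i u = v)
    (α : g →ₗ[K] g →ₗ[K] V₃)
    (brE : V₃ × g → V₃ × g → V₃ × g)
    (hbrE : ∀ p q : V₃ × g,
      brE p q = (⁅p.2, q.1⁆ - ⁅q.2, p.1⁆ + α p.2 q.2, ⁅p.2, q.2⁆))
    (brV : V₂ → V₂ → V₂) (hbrV : ∀ v v' : V₂, brV v v' = 0)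
    (μ : V₂ → V₃ × g) (hμ : ∀ v : V₂, μ v = (d v, 0)) :
    (∀ v v' : V₂, μ (v + v') = μ v + μ v') ∧
    (∀ (c : K) (v : V₂), μ (c • v) = c • μ v) ∧
    (∀ v v' : V₂, brE (μ v) (μ v') = μ (brV v v')) ∧
    (∀ (e : V₃ × g) (v v' : V₂),
      ⁅e.2, brV v v'⁆ = brV ⁅e.2, v⁆ v' + brV v ⁅e.2, v'⁆) ∧
    (∀ (e e' : V₃ × g) (v : V₂),
      ⁅(brE e e').2, v⁆ = ⁅e.2, ⁅e'.2, v⁆⁆ - ⁅e'.2, ⁅e.2, v⁆⁆) ∧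
    (∀ (e : V₃ × g) (v : V₂), μ ⁅e.2, v⁆ = brE e (μ v)) ∧
    (∀ v v' : V₂, ⁅(μ v).2, v'⁆ = brV v v') ∧
    (∀ v : V₂, μ v = 0 ↔ ∃ u : V₁, i u = v) ∧
    (Function.Surjective (fun e : V₃ × g => e.2)) ∧
    (∀ e : V₃ × g, e.2 = 0 ↔ ∃ v : V₂, μ v = e) := by
  obtain rfl : brE = AbelianExtension.bracket α := funext₂ hbrE
  obtain rfl : brV = fun _ _ => 0 := funext₂ hbrV
  obtain rfl : μ = inl K V₃ g ∘ₗ d := funext hμ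
  have hker (v : V₂) : (inl K V₃ g ∘ₗ d) v = 0 ↔ d v = 0 := by
    simp only [← mem_ker, ker_inl_comp]
  have hrange (e : V₃ × g) : e.2 = 0 ↔ ∃ v, (inl K V₃ g ∘ₗ d) v = e := by
    simp only [← mem_range, range_inl_comp_of_surjective hd_surj, mem_ker, snd_apply]
  refine ⟨map_add _, map_smul _, ?_, ?_, ?_, ?_, ?_, fun v => (hker v).trans (h_exact v),
    fun x => ⟨(0, x), rfl⟩, hrange⟩
  · intro v v'
    simp [AbelianExtension.bracket_inl]
  · simp
  · simp [lie_lie]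
  · intro e v
    simp [AbelianExtension.bracket_inl, hd_equiv]
  · simp

/-- Splicing a short exact sequence of `g`-modules
`0 → V₁ →(i) V₂ →(d) V₃ → 0` with the abelian extension `E = V₃ ×_α g` associated
to a 2-cocycle `α` yields a crossed module `μ : V₂ → E`, `μ v = (d v, 0)`, where
`V₂` carries the zero bracket (abelian Lie algebra) and `E` acts on `V₂` through
its `g`-component. The conclusions state: `μ` is linear and bracket-preserving,
the `E`-action is an action by derivations, the two crossed-module axioms hold,
`ker μ = i(V₁)`, and the cokernel of `μ` is `g` (four-term exact sequence
`0 → V₁ → V₂ → E → g → 0`). -/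
theorem spliced_crossed_module
    {K g V₁ V₂ V₃ : Type*} [Field K] [LieRing g] [LieAlgebra K g]
    [AddCommGroup V₁] [Module K V₁] [LieRingModule g V₁] [LieModule K g V₁]
    [AddCommGroup V₂] [Module K V₂] [LieRingModule g V₂] [LieModule K g V₂]
    [AddCommGroup V₃] [Module K V₃] [LieRingModule g V₃] [LieModule K g V₃]
    (i : V₁ →ₗ[K] V₂) (d : V₂ →ₗ[K] V₃)
    (hi_inj : Function.Injective i) (hd_surj : Function.Surjective d)
    (hi_equiv : ∀ (x : g) (u : V₁), i ⁅x, u⁆ = ⁅x, i u⁆)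
    (hd_equiv : ∀ (x : g) (v : V₂), d ⁅x, v⁆ = ⁅x, d v⁆)
    (h_exact : ∀ v : V₂, d v = 0 ↔ ∃ u : V₁, i u = v)
    (α : g →ₗ[K] g →ₗ[K] V₃)
    (hα_alt : ∀ x : g, α x x = 0)
    (hα_coc : ∀ x y z : g,
      ⁅x, α y z⁆ - ⁅y, α x z⁆ + ⁅z, α x y⁆
        - α ⁅x, y⁆ z + α ⁅x, z⁆ y - α ⁅y, z⁆ x = 0)
    (brE : V₃ × g → V₃ × g → V₃ × g)
    (hbrE : ∀ p q : V₃ × g,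
      brE p q = (⁅p.2, q.1⁆ - ⁅q.2, p.1⁆ + α p.2 q.2, ⁅p.2, q.2⁆))
    (brV : V₂ → V₂ → V₂) (hbrV : ∀ v v' : V₂, brV v v' = 0)
    (μ : V₂ → V₃ × g) (hμ : ∀ v : V₂, μ v = (d v, 0)) :
    (∀ v v' : V₂, μ (v + v') = μ v + μ v') ∧
    (∀ (c : K) (v : V₂), μ (c • v) = c • μ v) ∧
    (∀ v v' : V₂, brE (μ v) (μ v') = μ (brV v v')) ∧
    (∀ (e : V₃ × g) (v v' : V₂),
      ⁅e.2, brV v v'⁆ = brV ⁅e.2, v⁆ v' + brV v ⁅e.2, v'⁆) ∧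
    (∀ (e e' : V₃ × g) (v : V₂),
      ⁅(brE e e').2, v⁆ = ⁅e.2, ⁅e'.2, v⁆⁆ - ⁅e'.2, ⁅e.2, v⁆⁆) ∧
    (∀ (e : V₃ × g) (v : V₂), μ ⁅e.2, v⁆ = brE e (μ v)) ∧
    (∀ v v' : V₂, ⁅(μ v).2, v'⁆ = brV v v') ∧
    (∀ v : V₂, μ v = 0 ↔ ∃ u : V₁, i u = v) ∧
    (Function.Surjective (fun e : V₃ × g => e.2)) ∧
    (∀ e : V₃ × g, e.2 = 0 ↔ ∃ v : V₂, μ v = e) :=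
  spliced_crossed_module_general i d hd_surj hd_equiv h_exact α brE hbrE brV hbrV μ hμ
end

section
/- Let ĝ be a Lie algebra over a field K, l ⊆ ĝ a Lie ideal, z a ĝ-module on which l acts trivially, ω : l × l → z an alternating bilinear 2-cocycle of l with values in the trivial l-module z, and l̂ := z ⊕_ω l the central extension with bracket [(z₁,l₁),(z₂,l₂)] = (ω(l₁,l₂),[l₁,l₂]). Let θ : ĝ → Hom_K(l,z) be a linear map, written θ(x,l) := θₓ(l), such that for every x ∈ ĝ the map ζ(x) : (z,l) ↦ (x·z + θₓ(l), [x,l]) is a derivation of l̂. Then the assignment x·(z,l) := (x·z + θₓ(l), [x,l]) defines a representation of ĝ on l̂, i.e. [x,x']·(z,l) = x·(x'·(z,l)) − x'·(x·(z,l)) for all x,x' ∈ ĝ and (z,l) ∈ l̂, if and only if for all x, x' ∈ ĝ and l ∈ l: x·θ(x',l) − x'·θ(x,l) − θ([x,x'],l) + θ(x,[x',l]) + θ(x',[l,x]) = 0. -/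
/-!
The second component of the twisted action `x·(m, n) = (⁅x, m⁆ + θ x n, ⁅x, n⁆)` is the
module action on `N`, and the part `⁅x, m⁆` of the first one is the module action on `M`;
both satisfy the representation identity by the Jacobi identity. What is left of the identity
is an equation between the `θ`-terms alone, which is the cocycle condition.
-/

section TwistedAction

variable {L M N : Type*} [LieRing L] [AddCommGroup M] [LieRingModule L M]
  [AddCommGroup N] [LieRingModule L N]

def twistedAction (θ : L → N → M) (x : L) (p : M × N) : M × N :=
  (⁅x, p.1⁆ + θ x p.2, ⁅x, p.2⁆)

theorem twistedAction_lie_eq_iff (θ : L → N → M) (x x' : L) (p : M × N) :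
    twistedAction θ ⁅x, x'⁆ p =
        twistedAction θ x (twistedAction θ x' p) - twistedAction θ x' (twistedAction θ x p) ↔
      θ ⁅x, x'⁆ p.2 = (⁅x, θ x' p.2⁆ + θ x ⁅x', p.2⁆) - (⁅x', θ x p.2⁆ + θ x' ⁅x, p.2⁆) := by
  simp only [twistedAction, Prod.ext_iff, Prod.fst_sub, Prod.snd_sub, lie_lie, lie_add,
    and_true]
  constructor <;> intro h <;> linear_combination (norm := abel) h

end TwistedAction

theorem representation_condition_on_theta_general
    {K ghat z : Type*} [Field K] [LieRing ghat] [LieAlgebra K ghat]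
    [AddCommGroup z] [Module K z] [LieRingModule ghat z]
    (l : LieIdeal K ghat)
    (θ : ghat →ₗ[K] l →ₗ[K] z)
    (actE : ghat → z × l → z × l)
    (hactE : ∀ (x : ghat) (p : z × l), actE x p = (⁅x, p.1⁆ + θ x p.2, ⁅x, p.2⁆)) :
    (∀ (x x' : ghat) (p : z × l),
      actE ⁅x, x'⁆ p = actE x (actE x' p) - actE x' (actE x p)) ↔
    (∀ (x x' : ghat) (a : l),
      ⁅x, θ x' a⁆ - ⁅x', θ x a⁆ - θ ⁅x, x'⁆ a + θ x ⁅x', a⁆ + θ x' (-⁅x, a⁆) = 0) := by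
  obtain rfl : actE = twistedAction fun x a => θ x a := funext fun x => funext (hactE x)
  have cocycle_iff : ∀ (x x' : ghat) (a : l),
      θ ⁅x, x'⁆ a = (⁅x, θ x' a⁆ + θ x ⁅x', a⁆) - (⁅x', θ x a⁆ + θ x' ⁅x, a⁆) ↔
        ⁅x, θ x' a⁆ - ⁅x', θ x a⁆ - θ ⁅x, x'⁆ a + θ x ⁅x', a⁆ + θ x' (-⁅x, a⁆) = 0 := by
    intro x x' a
    rw [map_neg]
    constructor <;> intro h <;> linear_combination (norm := abel) -h
  simp only [twistedAction_lie_eq_iff, Prod.forall, forall_const, cocycle_iff]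

/-- Setup as in Statement 6, with a linear map
`θ : ghat → Hom(l,z)` such that every `ζ(x) : (z,l) ↦ (x·z + θ x l, [x,l])` is a
derivation of the central extension `lhat = z ⊕_ω l`. Then
`x·(z,l) := (x·z + θ x l, [x,l])` defines a representation of `ghat` on `lhat`
(i.e. `[x,x']·p = x·(x'·p) − x'·(x·p)` for all `p`) if and only if `θ` is a
1-cocycle: `x·θ(x',l) − x'·θ(x,l) − θ([x,x'],l) + θ(x,[x',l]) + θ(x',[l,x]) = 0`
for all `x, x' ∈ ghat`, `l ∈ l` (here `[l,x] = −[x,l]`). -/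
theorem representation_condition_on_theta
    {K ghat z : Type*} [Field K] [LieRing ghat] [LieAlgebra K ghat]
    [AddCommGroup z] [Module K z] [LieRingModule ghat z] [LieModule K ghat z]
    (l : LieIdeal K ghat)
    (h_triv : ∀ (a : l) (v : z), ⁅(a : ghat), v⁆ = 0)
    (ω : l →ₗ[K] l →ₗ[K] z)
    (hω_alt : ∀ a : l, ω a a = 0)
    (hω_coc : ∀ a b c : l,
      ω ⁅(a : ghat), b⁆ c + ω ⁅(b : ghat), c⁆ a + ω ⁅(c : ghat), a⁆ b = 0)
    (θ : ghat →ₗ[K] l →ₗ[K] z)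
    (br : z × l → z × l → z × l)
    (hbr : ∀ p q : z × l, br p q = (ω p.2 q.2, ⁅((p.2 : l) : ghat), q.2⁆))
    (actE : ghat → z × l → z × l)
    (hactE : ∀ (x : ghat) (p : z × l), actE x p = (⁅x, p.1⁆ + θ x p.2, ⁅x, p.2⁆))
    (h_der : ∀ (x : ghat) (p q : z × l),
      actE x (br p q) = br (actE x p) q + br p (actE x q)) :
    (∀ (x x' : ghat) (p : z × l),
      actE ⁅x, x'⁆ p = actE x (actE x' p) - actE x' (actE x p)) ↔
    (∀ (x x' : ghat) (a : l),
      ⁅x, θ x' a⁆ - ⁅x', θ x a⁆ - θ ⁅x, x'⁆ a + θ x ⁅x', a⁆ + θ x' (-⁅x, a⁆) = 0) :=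
  representation_condition_on_theta_general l θ actE hactE
end
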